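/- arXiv:1207.5336 — 4 statements merged into one kernel-verified Lean document; each statement's English description precedes it below -/
import Mathlib

section
/- If f : [a,b] → ℝ is continuously differentiable, then the right Caputo fractional derivative of f of order α ∈ (0,1), defined by (ᶜ_xD_b^α f)(x) = (-1/Γ(1-α)) ∫_x^b (t-x)^(-α) f'(t) dt, is continuous on [a,b]. -/
open MeasureTheory Set intervalIntegral Real

/-- The right Caputo fractional derivative of order `α` with end point `b`. -/
noncomputable def caputoRight (α b : ℝ) (f : ℝ → ℝ) (x : ℝ) : ℝ :=
  (-1 / Real.Gamma (1 - α)) * ∫ t in x..b, (t - x) ^ (-α) * deriv f t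

/-- If `f` is continuously differentiable on `[a,b]`, then the right Caputo fractional
derivative of `f` of order `α ∈ (0,1)` is continuous on `[a,b]`. -/
theorem caputoRight_continuousOn (α a b : ℝ) (f : ℝ → ℝ)
    (hα0 : 0 < α) (hα1 : α < 1) (hab : a < b)
    (hf : ∀ x ∈ Set.Icc a b, DifferentiableAt ℝ f x)
    (hf' : ContinuousOn (deriv f) (Set.Icc a b)) :
    ContinuousOn (caputoRight α b f) (Set.Icc a b) := by
  obtain ⟨M, hM⟩ := (isCompact_Icc (a := a) (b := b)).exists_bound_of_continuousOn hf'
  set μ := volume.restrict (Set.Ioc (0:ℝ) 1) with hμ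
  set F : ℝ → ℝ → ℝ := fun x u => u ^ (-α) * deriv f (x + (b - x) * u) with hFdef
  have hmap : ∀ x ∈ Set.Icc a b, ∀ u ∈ Set.Icc (0:ℝ) 1, x + (b - x) * u ∈ Set.Icc a b := by
    intro x hx u hu
    constructor
    · nlinarith [hx.1, hx.2, hu.1, hu.2]
    · nlinarith [hx.2, hu.1, hu.2]
  -- continuity of the parametric integral
  have hH : ContinuousOn (fun x => ∫ u, F x u ∂μ) (Set.Icc a b) := by
    apply MeasureTheory.continuousOn_of_dominated (bound := fun u => u ^ (-α) * M)
    · intro x hx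
      rw [hμ]
      apply ContinuousOn.aestronglyMeasurable ?_ measurableSet_Ioc
      refine ContinuousOn.mul ?_ ?_
      · intro u hu
        exact (Real.continuousAt_rpow_const u (-α) (Or.inl (ne_of_gt hu.1))).continuousWithinAt
      · refine (hf'.comp ?_ fun u hu => hmap x hx u ⟨hu.1.le, hu.2⟩)
        exact (continuous_const.add (continuous_const.mul continuous_id)).continuousOn
    · intro x hx
      rw [hμ, ae_restrict_iff' measurableSet_Ioc]
      refine ae_of_all _ fun u hu => ?_
      have hu0 : (0:ℝ) ≤ u ^ (-α) := Real.rpow_nonneg hu.1.le _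
      have := hM _ (hmap x hx u ⟨hu.1.le, hu.2⟩)
      calc ‖F x u‖ = u ^ (-α) * ‖deriv f (x + (b - x) * u)‖ := by
            rw [hFdef]; simp [norm_mul, abs_of_nonneg hu0]
        _ ≤ u ^ (-α) * M := by exact mul_le_mul_of_nonneg_left this hu0
    · have h1 : IntervalIntegrable (fun u : ℝ => u ^ (-α) * M) volume 0 1 :=
        (intervalIntegral.intervalIntegrable_rpow' (by linarith)).mul_const M
      rw [hμ]
      exact (intervalIntegrable_iff_integrableOn_Ioc_of_le zero_le_one).mp h1
    · rw [hμ, ae_restrict_iff' measurableSet_Ioc]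
      refine ae_of_all _ fun u hu => ?_
      refine continuousOn_const.mul ?_
      refine hf'.comp ?_ fun x hx => hmap x hx u ⟨hu.1.le, hu.2⟩
      exact (continuous_id.add ((continuous_const.sub continuous_id).mul continuous_const)).continuousOn
  -- the key change-of-variables identity
  have hkey : ∀ x ∈ Set.Icc a b,
      (∫ t in x..b, (t - x) ^ (-α) * deriv f t) = (b - x) ^ (1 - α) * ∫ u, F x u ∂μ := by
    intro x hx
    have hInt : (∫ u, F x u ∂μ) = ∫ u in (0:ℝ)..1, F x u := by
      rw [intervalIntegral.integral_of_le zero_le_one, hμ]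
    rcases eq_or_lt_of_le hx.2 with heq | hlt
    · subst heq
      simp [Real.zero_rpow (by linarith : (1:ℝ) - α ≠ 0)]
    · have hbx : (0:ℝ) < b - x := by linarith
      have h1 := intervalIntegral.integral_comp_mul_add
        (f := fun t => (t - x) ^ (-α) * deriv f t) (a := 0) (b := 1) (ne_of_gt hbx) x
      simp only [mul_zero, zero_add, mul_one, sub_add_cancel] at h1
      have h2 : (∫ u in (0:ℝ)..1, ((b - x) * u + x - x) ^ (-α) * deriv f ((b - x) * u + x))
          = (b - x) ^ (-α) * ∫ u in (0:ℝ)..1, F x u := by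
        rw [← intervalIntegral.integral_const_mul]
        apply intervalIntegral.integral_congr
        intro u hu
        rw [Set.uIcc_of_le zero_le_one] at hu
        have : ((b - x) * u) ^ (-α) = (b - x) ^ (-α) * u ^ (-α) :=
          Real.mul_rpow hbx.le hu.1
        rw [hFdef]
        simp only [add_sub_cancel_right]
        rw [this]
        ring_nf
      rw [h2] at h1
      have h3 : (∫ t in x..b, (t - x) ^ (-α) * deriv f t)
          = (b - x) * ((b - x) ^ (-α) * ∫ u in (0:ℝ)..1, F x u) := by
        rw [h1, smul_eq_mul]
        field_simp
      rw [h3, hInt]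
      rw [show (1:ℝ) - α = 1 + (-α) by ring, Real.rpow_add hbx, Real.rpow_one]
      ring
  -- conclude
  have : ContinuousOn (fun x => (-1 / Real.Gamma (1 - α)) *
      ((b - x) ^ (1 - α) * ∫ u, F x u ∂μ)) (Set.Icc a b) := by
    refine continuousOn_const.mul (ContinuousOn.mul ?_ hH)
    exact ((continuous_const.sub continuous_id).rpow_const
      (fun x => Or.inr (by linarith))).continuousOn
  refine this.congr fun x hx => ?_
  rw [caputoRight, hkey x hx]
end

section
/- Fractional integration by parts for right Caputo derivatives: for suitable f, g on [a,b], ∫_a^b g(x) · (ᶜ_xD_b^α f)(x) dx = ∫_a^b f(x) · (_aD_x^α g)(x) dx − [(_aI_x^{1-α} g)(x) · f(x)]_{x=a}^{x=b}. -/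
/-- The left Riemann–Liouville fractional integral of order `α` with base point `a`. -/
noncomputable def rlIntLeft (α a : ℝ) (g : ℝ → ℝ) (x : ℝ) : ℝ :=
  (1 / Real.Gamma α) * ∫ t in a..x, (x - t) ^ (α - 1) * g t

/-- The left Riemann–Liouville fractional derivative of order `α` with base point `a`. -/
noncomputable def rlDerLeft (α a : ℝ) (g : ℝ → ℝ) (x : ℝ) : ℝ :=
  deriv (rlIntLeft (1 - α) a g) x

open MeasureTheory Set

theorem intervalIntegral_integral_swap_triangle {E : Type*} [NormedAddCommGroup E]
    [NormedSpace ℝ E] [CompleteSpace E] {a b : ℝ} (hab : a ≤ b) {F : ℝ → ℝ → E}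
    (hF : Integrable ({p : ℝ × ℝ | p.1 < p.2}.indicator (Function.uncurry F))
      ((volume.restrict (Ioc a b)).prod (volume.restrict (Ioc a b)))) :
    ∫ x in a..b, ∫ t in x..b, F x t = ∫ t in a..b, ∫ x in a..t, F x t := by
  set P := {p : ℝ × ℝ | p.1 < p.2}.indicator (Function.uncurry F)
  have inner_right : ∀ x ∈ Ioc a b, ∫ t in Ioc a b, P (x, t) = ∫ t in x..b, F x t := by
    intro x hx
    have hset : Ioi x ∩ Ioc a b = Ioc x b := by
      ext t; simp only [mem_inter_iff, mem_Ioi, mem_Ioc]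
      exact ⟨fun ht => ⟨ht.1, ht.2.2⟩, fun ht => ⟨ht.1, hx.1.trans ht.1, ht.2⟩⟩
    have hind : (fun t => P (x, t)) = (Ioi x).indicator (F x) := by
      ext t; simp [P, indicator_apply]
    rw [hind, integral_indicator measurableSet_Ioi, Measure.restrict_restrict measurableSet_Ioi,
      hset, intervalIntegral.integral_of_le hx.2]
  have inner_left : ∀ t ∈ Ioc a b, ∫ x in Ioc a b, P (x, t) = ∫ x in a..t, F x t := by
    intro t ht
    have hset : Iio t ∩ Ioc a b = Ioo a t := by
      ext x; simp only [mem_inter_iff, mem_Iio, mem_Ioc, mem_Ioo]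
      exact ⟨fun hx => ⟨hx.2.1, hx.1⟩, fun hx => ⟨hx.2, hx.1, hx.2.le.trans ht.2⟩⟩
    have hind : (fun x => P (x, t)) = (Iio t).indicator (fun x => F x t) := by
      ext x; simp [P, indicator_apply]
    rw [hind, integral_indicator measurableSet_Iio, Measure.restrict_restrict measurableSet_Iio,
      hset, Measure.restrict_congr_set Ioo_ae_eq_Ioc, intervalIntegral.integral_of_le ht.1.le]
  calc ∫ x in a..b, ∫ t in x..b, F x t
      = ∫ x in Ioc a b, ∫ t in Ioc a b, P (x, t) := by
        rw [intervalIntegral.integral_of_le hab]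
        exact setIntegral_congr_fun measurableSet_Ioc fun x hx => (inner_right x hx).symm
    _ = ∫ t in Ioc a b, ∫ x in Ioc a b, P (x, t) := integral_integral_swap hF
    _ = ∫ t in a..b, ∫ x in a..t, F x t := by
        rw [intervalIntegral.integral_of_le hab]
        exact setIntegral_congr_fun measurableSet_Ioc inner_left

theorem integrable_indicator_lt_mul_kernel_mul {a b : ℝ} {k g h : ℝ → ℝ}
    (hk : IntegrableOn k (Ioc 0 (b - a))) (hg : IntegrableOn g (Ioc a b))
    (hh : ContinuousOn h (Icc a b)) :
    Integrable ({p : ℝ × ℝ | p.1 < p.2}.indicator fun p => g p.1 * (k (p.2 - p.1) * h p.2))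
      ((volume.restrict (Ioc a b)).prod (volume.restrict (Ioc a b))) := by
  obtain ⟨C, hC⟩ := isCompact_Icc.exists_bound_of_continuousOn hh
  have hconv : Integrable (fun p : ℝ × ℝ =>
      (Ioc a b).indicator g p.1 * (Ioc 0 (b - a)).indicator k (p.2 - p.1)) (volume.prod volume) :=
    ((hg.integrable_indicator measurableSet_Ioc).convolution_integrand
      (ContinuousLinearMap.mul ℝ ℝ) (hk.integrable_indicator measurableSet_Ioc)).swap
  rw [Measure.prod_restrict]
  have hsq : ∀ᵐ p ∂(volume.prod volume).restrict (Ioc a b ×ˢ Ioc a b),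
      p ∈ Ioc a b ×ˢ Ioc a b :=
    ae_restrict_mem (measurableSet_Ioc.prod measurableSet_Ioc)
  refine (hconv.restrict.bdd_mul (f := fun p => h p.2) (c := C) ?_ ?_).congr ?_
  · exact (hh.comp continuousOn_snd fun p hp => Ioc_subset_Icc_self hp.2).aestronglyMeasurable
      (measurableSet_Ioc.prod measurableSet_Ioc)
  · filter_upwards [hsq] with p hp using hC p.2 (Ioc_subset_Icc_self hp.2)
  · filter_upwards [hsq] with p ⟨hx, ht⟩
    by_cases hlt : p.1 < p.2
    · have hk' : p.2 - p.1 ∈ Ioc 0 (b - a) := ⟨by linarith, by linarith [hx.1, ht.2]⟩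
      simp only [indicator_apply, mem_ofPred_eq, hx, hk', hlt, if_true]
      ring
    · have hk' : p.2 - p.1 ∉ Ioc 0 (b - a) := fun hmem => hlt (by linarith [hmem.1])
      simp only [indicator_apply, mem_ofPred_eq, hk', hlt, if_false, mul_zero]

theorem integral_mul_integral_kernel_swap {a b : ℝ} (hab : a ≤ b) {k g h : ℝ → ℝ}
    (hk : IntegrableOn k (Ioc 0 (b - a))) (hg : IntegrableOn g (Ioc a b))
    (hh : ContinuousOn h (Icc a b)) :
    ∫ x in a..b, g x * ∫ t in x..b, k (t - x) * h t =
      ∫ t in a..b, h t * ∫ x in a..t, k (t - x) * g x := by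
  simp_rw [← intervalIntegral.integral_const_mul]
  rw [intervalIntegral_integral_swap_triangle hab
    (F := fun x t => g x * (k (t - x) * h t)) (integrable_indicator_lt_mul_kernel_mul hk hg hh)]
  congr 1 with t
  congr 1 with x
  ring

theorem integral_mul_caputoRight {α a b : ℝ} (hα : α < 1) (hab : a ≤ b) {f g : ℝ → ℝ}
    (hg : IntegrableOn g (Ioc a b)) (hf' : ContinuousOn (deriv f) (Icc a b)) :
    ∫ x in a..b, g x * caputoRight α b f x =
      -∫ t in a..b, rlIntLeft (1 - α) a g t * deriv f t := by
  have hk : IntegrableOn (fun s : ℝ => s ^ (-α)) (Ioc 0 (b - a)) :=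
    (intervalIntegral.intervalIntegrable_rpow' (by linarith)).1
  have swap := integral_mul_integral_kernel_swap hab hk hg hf'
  simp only [caputoRight, rlIntLeft, sub_sub_cancel_left]
  calc _ = -1 / Real.Gamma (1 - α) *
          ∫ x in a..b, g x * ∫ t in x..b, (t - x) ^ (-α) * deriv f t := by
        rw [← intervalIntegral.integral_const_mul]
        congr 1 with x
        ring
    _ = _ := by
        rw [swap, neg_div, neg_mul, ← intervalIntegral.integral_const_mul]
        congr 2 with t
        ring

theorem fractional_integration_by_parts_right_general (α a b : ℝ) (f g : ℝ → ℝ)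
    (hα1 : α < 1) (hab : a < b)
    (hg : ContinuousOn g (Set.Icc a b))
    (hf : ∀ x ∈ Set.Icc a b, DifferentiableAt ℝ f x)
    (hf' : ContinuousOn (deriv f) (Set.Icc a b))
    (hI : ∀ x ∈ Set.Icc a b, DifferentiableAt ℝ (rlIntLeft (1 - α) a g) x)
    (hI' : ContinuousOn (deriv (rlIntLeft (1 - α) a g)) (Set.Icc a b)) :
    ∫ x in a..b, g x * caputoRight α b f x =
      (∫ x in a..b, f x * rlDerLeft α a g x) -
        (rlIntLeft (1 - α) a g b * f b - rlIntLeft (1 - α) a g a * f a) := by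
  have hIcc : uIcc a b = Icc a b := uIcc_of_le hab.le
  have parts := intervalIntegral.integral_mul_deriv_eq_deriv_mul
    (fun x hx => (hI x (hIcc ▸ hx)).hasDerivAt) (fun x hx => (hf x (hIcc ▸ hx)).hasDerivAt)
    ((hIcc ▸ hI').intervalIntegrable) ((hIcc ▸ hf').intervalIntegrable)
  rw [integral_mul_caputoRight hα1 hab.le (hg.integrableOn_Icc.mono_set Ioc_subset_Icc_self) hf',
    parts]
  simp only [rlDerLeft, mul_comm (f _)]
  ring

/-- Fractional integration by parts for right Caputo derivatives:
`∫_a^b g·(ᶜ_xD_b^α f) = ∫_a^b f·(_aD_x^α g) − [(_aI_x^{1-α} g)·f]_{x=a}^{x=b}`. -/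
theorem fractional_integration_by_parts_right (α a b : ℝ) (f g : ℝ → ℝ)
    (hα0 : 0 < α) (hα1 : α < 1) (hab : a < b)
    (hg : ContinuousOn g (Set.Icc a b))
    (hf : ∀ x ∈ Set.Icc a b, DifferentiableAt ℝ f x)
    (hf' : ContinuousOn (deriv f) (Set.Icc a b))
    (hI : ∀ x ∈ Set.Icc a b, DifferentiableAt ℝ (rlIntLeft (1 - α) a g) x)
    (hI' : ContinuousOn (deriv (rlIntLeft (1 - α) a g)) (Set.Icc a b)) :
    ∫ x in a..b, g x * caputoRight α b f x =
      (∫ x in a..b, f x * rlDerLeft α a g x) -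
        (rlIntLeft (1 - α) a g b * f b - rlIntLeft (1 - α) a g a * f a) :=
  fractional_integration_by_parts_right_general α a b f g hα1 hab hg hf hf' hI hI'
end

section
/- Fundamental lemma of the calculus of variations on an infinite horizon: if g is continuous on [a,+∞) and lim_{T→+∞} inf_{T'≥T} ∫_a^{T'} g(t) h(t) dt = 0 for every continuous function h : [a,+∞) → ℝ with h(a) = 0, then g(t) = 0 for all t ≥ a. -/
/-- Fundamental lemma of the calculus of variations on an infinite horizon:
if `g` is continuous on `[a,∞)` and
`lim_{T→∞} inf_{T'≥T} ∫_a^{T'} g·h = 0` (i.e. `liminf_{T'→∞} ∫_a^{T'} g·h = 0`)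
for every continuous `h` with `h a = 0`, then `g ≡ 0` on `[a,∞)`. -/
theorem infinite_horizon_fundamental_lemma (a : ℝ) (g : ℝ → ℝ)
    (hg : ContinuousOn g (Set.Ici a))
    (hyp : ∀ h : ℝ → ℝ, ContinuousOn h (Set.Ici a) → h a = 0 →
      Filter.liminf (fun T' => ∫ t in a..T', g t * h t) Filter.atTop = 0) :
    ∀ t, a ≤ t → g t = 0 := by
  intro t₀ ht₀
  by_contra hne
  have hc : 0 < |g t₀| := abs_pos.mpr hne
  have hcw : ContinuousWithinAt g (Set.Ici a) t₀ := hg t₀ ht₀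
  rw [Metric.continuousWithinAt_iff] at hcw
  obtain ⟨ε, hε, hδ⟩ := hcw (|g t₀| / 2) (by positivity)
  set h : ℝ → ℝ := fun t => g t₀ * ((t - a) * max (ε - |t - t₀|) 0) with hhdef
  have hcont : Continuous h := by
    apply continuous_const.mul
    exact (continuous_id.sub continuous_const).mul
      ((continuous_const.sub (continuous_id.sub continuous_const).abs).max continuous_const)
  have ha0 : h a = 0 := by simp [hhdef]
  -- sign fact
  have hgg : ∀ t ∈ Set.Ici a, |t - t₀| < ε → 0 < g t₀ * g t := by
    intro t ht hdist
    have hd : dist t t₀ < ε := by rw [Real.dist_eq]; exact hdist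
    have h1 := hδ ht hd
    rw [Real.dist_eq] at h1
    obtain ⟨h2, h3⟩ := abs_lt.mp h1
    nlinarith [sq_abs (g t₀), abs_nonneg (g t₀), neg_abs_le (g t₀), le_abs_self (g t₀)]
  -- zero fact
  have hfzero : ∀ t : ℝ, ε - |t - t₀| ≤ 0 → g t * h t = 0 := by
    intro t hle
    simp [hhdef, max_eq_right hle]
  -- nonnegativity on [a, ∞)
  have hfnonneg : ∀ t ∈ Set.Ici a, 0 ≤ g t * h t := by
    intro t ht
    rcases le_or_gt (ε - |t - t₀|) 0 with hle | hlt
    · rw [hfzero t hle]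
    · have habs : |t - t₀| < ε := by linarith
      have hpos := hgg t ht habs
      have hpp : 0 ≤ (t - a) * max (ε - |t - t₀|) 0 :=
        mul_nonneg (by simpa using ht) (le_max_right _ _)
      have heq : g t * h t = (g t₀ * g t) * ((t - a) * max (ε - |t - t₀|) 0) := by
        simp [hhdef]; ring
      rw [heq]
      exact mul_nonneg hpos.le hpp
  -- integrability
  have hfc : ContinuousOn (fun t => g t * h t) (Set.Ici a) := hg.mul hcont.continuousOn
  have hint : ∀ x y : ℝ, a ≤ x → a ≤ y →
      IntervalIntegrable (fun t => g t * h t) MeasureTheory.volume x y := by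
    intro x y hx hy
    apply (hfc.mono ?_).intervalIntegrable
    intro t ht
    rcases Set.mem_uIcc.mp ht with h' | h' <;> simp only [Set.mem_Ici] <;> linarith [h'.1]
  -- the constant value
  set C : ℝ := ∫ t in a..(t₀ + ε), g t * h t with hCdef
  -- C > 0
  have hl : a ≤ max a (t₀ - ε / 2) := le_max_left _ _
  have hlr : max a (t₀ - ε / 2) < t₀ + ε / 2 := by
    apply max_lt <;> linarith
  have hra : a ≤ t₀ + ε / 2 := by linarith
  have hTa : a ≤ t₀ + ε := by linarith
  have hmid : 0 < ∫ t in (max a (t₀ - ε / 2))..(t₀ + ε / 2), g t * h t := by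
    apply intervalIntegral.intervalIntegral_pos_of_pos_on (hint _ _ hl hra)
    · intro t ht
      obtain ⟨ht1, ht2⟩ := ht
      have hta : a < t := lt_of_le_of_lt (le_max_left _ _) ht1
      have htb : t₀ - ε / 2 < t := lt_of_le_of_lt (le_max_right _ _) ht1
      have habs : |t - t₀| < ε / 2 := abs_lt.mpr ⟨by linarith, by linarith⟩
      have hpos := hgg t (le_of_lt hta) (by linarith)
      have hpp : 0 < max (ε - |t - t₀|) 0 := lt_max_of_lt_left (by linarith)
      have heq : g t * h t = (g t₀ * g t) * ((t - a) * max (ε - |t - t₀|) 0) := by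
        simp [hhdef]; ring
      rw [heq]
      exact mul_pos hpos (mul_pos (by linarith) hpp)
    · exact hlr
  have hleft : 0 ≤ ∫ t in a..(max a (t₀ - ε / 2)), g t * h t := by
    apply intervalIntegral.integral_nonneg hl
    intro t ht
    exact hfnonneg t ht.1
  have hright : 0 ≤ ∫ t in (t₀ + ε / 2)..(t₀ + ε), g t * h t := by
    apply intervalIntegral.integral_nonneg (by linarith)
    intro t ht
    exact hfnonneg t (le_trans hra ht.1)
  have hCsplit : C = (∫ t in a..(max a (t₀ - ε / 2)), g t * h t)
      + (∫ t in (max a (t₀ - ε / 2))..(t₀ + ε / 2), g t * h t)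
      + (∫ t in (t₀ + ε / 2)..(t₀ + ε), g t * h t) := by
    rw [hCdef]
    rw [← intervalIntegral.integral_add_adjacent_intervals (hint _ _ le_rfl hl) (hint _ _ hl hTa)]
    rw [← intervalIntegral.integral_add_adjacent_intervals (hint _ _ hl hra) (hint _ _ hra hTa)]
    ring
  have hCpos : 0 < C := by rw [hCsplit]; linarith
  -- eventual constancy
  have hev : ∀ᶠ T' in Filter.atTop, (∫ t in a..T', g t * h t) = C := by
    filter_upwards [Filter.eventually_ge_atTop (t₀ + ε)] with T' hT'
    have htail : (∫ t in (t₀ + ε)..T', g t * h t) = 0 := by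
      rw [← intervalIntegral.integral_zero (a := t₀ + ε) (b := T') (μ := MeasureTheory.volume)]
      apply intervalIntegral.integral_congr
      intro t ht
      rw [Set.uIcc_of_le hT'] at ht
      have : ε - |t - t₀| ≤ 0 := by
        have h1 : t₀ + ε ≤ t := ht.1
        have h2 : ε ≤ |t - t₀| := le_trans (by linarith) (le_abs_self _)
        linarith
      exact hfzero t this
    rw [← intervalIntegral.integral_add_adjacent_intervals (hint _ _ le_rfl hTa)
      (hint _ _ hTa (le_trans hTa hT')), htail, ← hCdef, add_zero]
  have hlim := hyp h hcont.continuousOn ha0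
  rw [Filter.liminf_congr hev, Filter.liminf_const] at hlim
  exact absurd hlim (ne_of_gt hCpos)
end

section
/- Classical transversality condition with Lagrangian depending on the end-point (α → 1 limit of Theorem 2): if (x,T) extremizes J(x,T) = ∫_a^T L(t,x(t),x'(t),φ(T)) dt subject to x(a) = x_a and x(T) = φ(T), and x satisfies ∂₂L − d/dt ∂₃L = 0 on [a,T], then (φ'(T) − x'(T))·∂₃L(T,x(T),x'(T),φ(T)) + φ'(T)·∫_a^T ∂₄L(t,x(t),x'(t),φ(T)) dt + L(T,x(T),x'(T),φ(T)) = 0. -/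
/-!
Perturb `x` by `y_S = x + (φ S - x S) ψ`, where `ψ` is a smooth cutoff vanishing at `a` and equal
to `1` near `T`. For `S` near `T` the pair `(y_S, S)` is admissible and `y_T = x`, so
`g S = J y_S S` has a local extremum at `T` and `g' T = 0`. By Leibniz' rule,
`g' T = L(T) + ∫_a^T ∂_S L(t, y_S, y_S', φ S)|_{S=T} dt`, and the integrand is
`(φ' T - x' T) (ψ ∂₂L + ψ' ∂₃L) + φ' T ∂₄L`. Along an extremal `ψ ∂₂L + ψ' ∂₃L = (ψ ∂₃L)'`,
which integrates to `∂₃L` at `T`.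
-/

open Set Filter Topology Function intervalIntegral

section Leibniz

variable {E : Type*} [NormedAddCommGroup E] [NormedSpace ℝ E]
  {G G' : ℝ → ℝ → E}

theorem hasDerivAt_intervalIntegral_param (hG : Continuous (uncurry G))
    (hG' : Continuous (uncurry G')) (hderiv : ∀ S t, HasDerivAt (G · t) (G' S t) S)
    (a b S : ℝ) :
    HasDerivAt (fun S => ∫ t in a..b, G S t) (∫ t in a..b, G' S t) S := by
  obtain ⟨C, hC⟩ := ((isCompact_closedBall S 1).prod (isCompact_uIcc (a := a) (b := b))
    ).exists_bound_of_continuousOn hG'.continuousOn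
  refine (hasDerivAt_integral_of_dominated_loc_of_deriv_le (bound := fun _ => C)
    (Metric.closedBall_mem_nhds S one_pos) (Eventually.of_forall fun S' =>
      (hG.comp (Continuous.prodMk_right S')).aestronglyMeasurable)
    ((hG.comp (Continuous.prodMk_right S)).intervalIntegrable a b)
    (hG'.comp (Continuous.prodMk_right S)).aestronglyMeasurable ?_ intervalIntegrable_const
    (Eventually.of_forall fun t _ S' _ => hderiv S' t)).2
  exact Eventually.of_forall fun t ht S' hS' => hC (S', t) ⟨hS', uIoc_subset_uIcc ht⟩

theorem hasDerivAt_intervalIntegral_diag [CompleteSpace E] (hG : Continuous (uncurry G))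
    (hG' : Continuous (uncurry G')) (hderiv : ∀ S t, HasDerivAt (G · t) (G' S t) S)
    (a T : ℝ) :
    HasDerivAt (fun S => ∫ t in a..S, G S t) (G T T + ∫ t in a..T, G' T t) T := by
  -- `(S, U) ↦ ∫ t in a..U, G S t` has continuous partial derivatives; restrict to the diagonal.
  have hF := hasStrictFDerivAt_uncurry_coprod (u := (T, T))
    (f := fun S U => ∫ t in a..U, G S t)
    (f₁ := fun S U => ContinuousLinearMap.toSpanSingleton ℝ (∫ t in a..U, G' S t))
    (f₂ := fun S U => ContinuousLinearMap.toSpanSingleton ℝ (G S U))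
    (Eventually.of_forall fun v =>
      (hasDerivAt_intervalIntegral_param hG hG' hderiv a v.2 v.1).hasFDerivAt)
    (Eventually.of_forall fun v =>
      (integral_hasDerivAt_right ((hG.comp (Continuous.prodMk_right v.1)).intervalIntegrable _ _)
        ((hG.comp (Continuous.prodMk_right v.1)).stronglyMeasurableAtFilter _ _)
        (hG.comp (Continuous.prodMk_right v.1)).continuousAt).hasFDerivAt)
    ((ContinuousLinearMap.toSpanSingletonCLE (𝕜 := ℝ) (E := E)).continuous.comp
      (continuous_parametric_primitive_of_continuous hG')).continuousAt
    ((ContinuousLinearMap.toSpanSingletonCLE (𝕜 := ℝ) (E := E)).continuous.comp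
      hG).continuousAt
  have hdiag : HasDerivAt (fun S : ℝ => (S, S)) (1, 1) T :=
    (hasDerivAt_id T).prodMk (hasDerivAt_id T)
  simpa [comp_def, HasUncurry.uncurry, add_comm] using
    hF.hasFDerivAt.comp_hasDerivAt_of_eq T hdiag rfl

end Leibniz

def uncurry₄ (L : ℝ → ℝ → ℝ → ℝ → ℝ) (p : ℝ × ℝ × ℝ × ℝ) : ℝ :=
  L p.1 p.2.1 p.2.2.1 p.2.2.2

noncomputable def partialDeriv₁ (L : ℝ → ℝ → ℝ → ℝ → ℝ) (t y v w : ℝ) : ℝ :=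
  deriv (fun t => L t y v w) t

noncomputable def partialDeriv₂ (L : ℝ → ℝ → ℝ → ℝ → ℝ) (t y v w : ℝ) : ℝ :=
  deriv (fun y => L t y v w) y

noncomputable def partialDeriv₃ (L : ℝ → ℝ → ℝ → ℝ → ℝ) (t y v w : ℝ) : ℝ :=
  deriv (fun v => L t y v w) v

noncomputable def partialDeriv₄ (L : ℝ → ℝ → ℝ → ℝ → ℝ) (t y v w : ℝ) : ℝ :=
  deriv (fun w => L t y v w) w

section PartialDerivatives

variable {L : ℝ → ℝ → ℝ → ℝ → ℝ}

theorem HasFDerivAt.uncurry₄_comp_hasDerivAt {D : ℝ × ℝ × ℝ × ℝ →L[ℝ] ℝ}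
    {α β γ δ : ℝ → ℝ} {α' β' γ' δ' s : ℝ}
    (hL : HasFDerivAt (uncurry₄ L) D (α s, β s, γ s, δ s))
    (hα : HasDerivAt α α' s) (hβ : HasDerivAt β β' s) (hγ : HasDerivAt γ γ' s)
    (hδ : HasDerivAt δ δ' s) :
    HasDerivAt (fun s => L (α s) (β s) (γ s) (δ s)) (D (α', β', γ', δ')) s :=
  HasFDerivAt.comp_hasDerivAt (l := uncurry₄ L) s hL (hα.prodMk (hβ.prodMk (hγ.prodMk hδ)))

theorem fderiv_uncurry₄_apply {p : ℝ × ℝ × ℝ × ℝ}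
    (hL : DifferentiableAt ℝ (uncurry₄ L) p) (v : ℝ × ℝ × ℝ × ℝ) :
    fderiv ℝ (uncurry₄ L) p v = v.1 * uncurry₄ (partialDeriv₁ L) p
      + v.2.1 * uncurry₄ (partialDeriv₂ L) p + v.2.2.1 * uncurry₄ (partialDeriv₃ L) p
      + v.2.2.2 * uncurry₄ (partialDeriv₄ L) p := by
  obtain ⟨t, y, u, w⟩ := p
  obtain ⟨v₁, v₂, v₃, v₄⟩ := v
  have hD := hL.hasFDerivAt
  have h₁ := (hD.uncurry₄_comp_hasDerivAt (hasDerivAt_id' t) (hasDerivAt_const t y)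
    (hasDerivAt_const t u) (hasDerivAt_const t w)).deriv
  have h₂ := (hD.uncurry₄_comp_hasDerivAt (hasDerivAt_const y t) (hasDerivAt_id' y)
    (hasDerivAt_const y u) (hasDerivAt_const y w)).deriv
  have h₃ := (hD.uncurry₄_comp_hasDerivAt (hasDerivAt_const u t) (hasDerivAt_const u y)
    (hasDerivAt_id' u) (hasDerivAt_const u w)).deriv
  have h₄ := (hD.uncurry₄_comp_hasDerivAt (hasDerivAt_const w t) (hasDerivAt_const w y)
    (hasDerivAt_const w u) (hasDerivAt_id' w)).deriv
  have hv : ((v₁, v₂, v₃, v₄) : ℝ × ℝ × ℝ × ℝ)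
      = v₁ • ((1 : ℝ), (0 : ℝ), (0 : ℝ), (0 : ℝ)) + v₂ • (0, 1, 0, 0) + v₃ • (0, 0, 1, 0)
        + v₄ • (0, 0, 0, 1) := by
    ext <;> simp
  conv_lhs => rw [hv]
  simp only [map_add, map_smul, smul_eq_mul, uncurry₄, partialDeriv₁, partialDeriv₂,
    partialDeriv₃, partialDeriv₄, h₁, h₂, h₃, h₄]

variable {n : WithTop ℕ∞}

theorem ContDiff.uncurry₄_partialDeriv₂ (hL : ContDiff ℝ (n + 1) (uncurry₄ L)) :
    ContDiff ℝ n (uncurry₄ (partialDeriv₂ L)) := by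
  simpa [fderiv_uncurry₄_apply (hL.differentiable (by simp) _)] using
    (hL.fderiv_right le_rfl).clm_apply
      (contDiff_const (c := ((0 : ℝ), (1 : ℝ), (0 : ℝ), (0 : ℝ))))

theorem ContDiff.uncurry₄_partialDeriv₃ (hL : ContDiff ℝ (n + 1) (uncurry₄ L)) :
    ContDiff ℝ n (uncurry₄ (partialDeriv₃ L)) := by
  simpa [fderiv_uncurry₄_apply (hL.differentiable (by simp) _)] using
    (hL.fderiv_right le_rfl).clm_apply
      (contDiff_const (c := ((0 : ℝ), (0 : ℝ), (1 : ℝ), (0 : ℝ))))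

theorem ContDiff.uncurry₄_partialDeriv₄ (hL : ContDiff ℝ (n + 1) (uncurry₄ L)) :
    ContDiff ℝ n (uncurry₄ (partialDeriv₄ L)) := by
  simpa [fderiv_uncurry₄_apply (hL.differentiable (by simp) _)] using
    (hL.fderiv_right le_rfl).clm_apply
      (contDiff_const (c := ((0 : ℝ), (0 : ℝ), (0 : ℝ), (1 : ℝ))))

end PartialDerivatives

section EulerLagrange

variable {L : ℝ → ℝ → ℝ → ℝ → ℝ} {x η : ℝ → ℝ} {a T w : ℝ}

theorem integral_mul_partialDeriv₂_add_deriv_mul_partialDeriv₃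
    (hL : ContDiff ℝ 2 (uncurry₄ L)) (hx : ContDiff ℝ 2 x) (hη : ContDiff ℝ 1 η)
    (haT : a ≤ T)
    (hEL : ∀ t ∈ Icc a T, partialDeriv₂ L t (x t) (deriv x t) w
      - deriv (fun s => partialDeriv₃ L s (x s) (deriv x s) w) t = 0) :
    ∫ t in a..T, (η t * partialDeriv₂ L t (x t) (deriv x t) w
        + deriv η t * partialDeriv₃ L t (x t) (deriv x t) w)
      = η T * partialDeriv₃ L T (x T) (deriv x T) w
        - η a * partialDeriv₃ L a (x a) (deriv x a) w := by
  set P := fun s => partialDeriv₃ L s (x s) (deriv x s) w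
  have hP : ContDiff ℝ 1 P :=
    (ContDiff.uncurry₄_partialDeriv₃ (n := 1) hL).comp
      (contDiff_id.prodMk ((hx.of_le one_le_two).prodMk
        ((hx.deriv' (n := 1)).prodMk contDiff_const)))
  calc _ = ∫ t in a..T, (deriv η t * P t + η t * deriv P t) := by
        refine integral_congr fun t ht => ?_
        rw [uIcc_of_le haT] at ht
        simp only [P, ← sub_eq_zero.mp (hEL t ht)]
        ring
    _ = _ := integral_deriv_mul_eq_sub
        (fun t _ => (hη.differentiable one_ne_zero t).hasDerivAt)
        (fun t _ => (hP.differentiable one_ne_zero t).hasDerivAt)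
        ((hη.continuous_deriv le_rfl).intervalIntegrable _ _)
        ((hP.continuous_deriv le_rfl).intervalIntegrable _ _)

end EulerLagrange

section Variation

open scoped ContDiff

variable {L : ℝ → ℝ → ℝ → ℝ → ℝ} {x φ ψ : ℝ → ℝ} {a b T δ : ℝ}

def variation (x φ ψ : ℝ → ℝ) (S t : ℝ) : ℝ := x t + (φ S - x S) * ψ t

theorem variation_self (hxT : x T = φ T) : variation x φ ψ T = x := by
  funext t
  simp [variation, hxT]

theorem contDiff_variation {n : WithTop ℕ∞} (hx : ContDiff ℝ n x) (hψ : ContDiff ℝ n ψ)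
    (S : ℝ) :
    ContDiff ℝ n (variation x φ ψ S) :=
  hx.add (contDiff_const.mul hψ)

theorem deriv_variation (hx : Differentiable ℝ x) (hψ : Differentiable ℝ ψ) (S : ℝ) :
    deriv (variation x φ ψ S) = fun t => deriv x t + (φ S - x S) * deriv ψ t := by
  funext t
  exact ((hx t).hasDerivAt.add ((hψ t).hasDerivAt.const_mul _)).deriv

theorem exists_contDiff_eq_zero_eventually_eq_one (haT : a < T) :
    ∃ ψ : ℝ → ℝ, ContDiff ℝ ∞ ψ ∧ ψ a = 0 ∧ ∀ᶠ t in 𝓝 T, ψ t = 1 := by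
  refine ⟨fun t => Real.smoothTransition (2 * (t - a) / (T - a)),
    Real.smoothTransition.contDiff.comp (by fun_prop), by simp, ?_⟩
  filter_upwards [lt_mem_nhds (show (a + T) / 2 < T by linarith)] with t ht
  exact Real.smoothTransition.one_of_one_le ((one_le_div (by linarith)).mpr (by linarith))

theorem eventually_variation_close (hφ : ContinuousAt φ T) (hx : ContDiff ℝ 1 x)
    (hψ : ContDiff ℝ 1 ψ) (hxT : x T = φ T) (hδ : 0 < δ) :
    ∀ᶠ S in 𝓝 T, ∀ s ∈ Icc a b,
      |variation x φ ψ S s - x s| + |deriv (variation x φ ψ S) s - deriv x s| < δ := by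
  obtain ⟨M, hM⟩ := (isCompact_Icc (a := a) (b := b)).exists_bound_of_continuousOn
    (f := fun s => |ψ s| + |deriv ψ s|)
    (hψ.continuous.abs.add (hψ.continuous_deriv le_rfl).abs).continuousOn
  have hc : Tendsto (fun S => |φ S - x S| * M) (𝓝 T) (𝓝 0) := by
    simpa [hxT] using (hφ.sub hx.continuous.continuousAt).abs.tendsto.mul_const M
  filter_upwards [hc.eventually (gt_mem_nhds hδ)] with S hS s hs
  rw [deriv_variation (hx.differentiable one_ne_zero) (hψ.differentiable one_ne_zero)]
  have hMs : |ψ s| + |deriv ψ s| ≤ M := by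
    simpa [abs_of_nonneg (add_nonneg (abs_nonneg (ψ s)) (abs_nonneg (deriv ψ s)))] using hM s hs
  calc |variation x φ ψ S s - x s| + |deriv x s + (φ S - x S) * deriv ψ s - deriv x s|
      = |φ S - x S| * (|ψ s| + |deriv ψ s|) := by simp [variation, abs_mul, mul_add]
    _ ≤ |φ S - x S| * M := by gcongr
    _ < δ := hS

theorem integral_fderiv_uncurry₄_apply (hL : ContDiff ℝ 1 (uncurry₄ L))
    (hx : ContDiff ℝ 1 x) (hψ : ContDiff ℝ 1 ψ) (κ μ w a T : ℝ) :
    ∫ t in a..T,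
        fderiv ℝ (uncurry₄ L) (t, x t, deriv x t, w) (0, κ * ψ t, κ * deriv ψ t, μ)
      = κ * (∫ t in a..T, (ψ t * partialDeriv₂ L t (x t) (deriv x t) w
            + deriv ψ t * partialDeriv₃ L t (x t) (deriv x t) w))
        + μ * ∫ t in a..T, partialDeriv₄ L t (x t) (deriv x t) w := by
  have hψc := hψ.continuous
  have hψ'c := hψ.continuous_deriv le_rfl
  have hq : Continuous fun t => ((t, x t, deriv x t, w) : ℝ × ℝ × ℝ × ℝ) :=
    continuous_id.prodMk (hx.continuous.prodMk ((hx.continuous_deriv le_rfl).prodMk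
      continuous_const))
  have h₂ : Continuous fun t => partialDeriv₂ L t (x t) (deriv x t) w :=
    (ContDiff.uncurry₄_partialDeriv₂ (n := 0) hL).continuous.comp hq
  have h₃ : Continuous fun t => partialDeriv₃ L t (x t) (deriv x t) w :=
    (ContDiff.uncurry₄_partialDeriv₃ (n := 0) hL).continuous.comp hq
  have h₄ : Continuous fun t => partialDeriv₄ L t (x t) (deriv x t) w :=
    (ContDiff.uncurry₄_partialDeriv₄ (n := 0) hL).continuous.comp hq
  rw [← integral_const_mul, ← integral_const_mul,
    ← integral_add (Continuous.intervalIntegrable (by fun_prop) _ _)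
      (Continuous.intervalIntegrable (by fun_prop) _ _)]
  refine integral_congr fun t _ => ?_
  simp only [fderiv_uncurry₄_apply (hL.differentiable one_ne_zero _), uncurry₄]
  ring

theorem hasDerivAt_integral_variation (hL : ContDiff ℝ 1 (uncurry₄ L)) (hφ : ContDiff ℝ 1 φ)
    (hx : ContDiff ℝ 1 x) (hψ : ContDiff ℝ 1 ψ) (hxT : x T = φ T) (a : ℝ) :
    HasDerivAt
      (fun S => ∫ t in a..S, L t (variation x φ ψ S t) (deriv (variation x φ ψ S) t) (φ S))
      (L T (x T) (deriv x T) (φ T)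
        + (deriv φ T - deriv x T)
          * (∫ t in a..T, (ψ t * partialDeriv₂ L t (x t) (deriv x t) (φ T)
              + deriv ψ t * partialDeriv₃ L t (x t) (deriv x t) (φ T)))
        + deriv φ T * ∫ t in a..T, partialDeriv₄ L t (x t) (deriv x t) (φ T)) T := by
  have hxd := hx.differentiable one_ne_zero
  have hψd := hψ.differentiable one_ne_zero
  have hφd := hφ.differentiable one_ne_zero
  have hxc := hx.continuous
  have hψc := hψ.continuous
  have hφc := hφ.continuous
  have hx'c := hx.continuous_deriv le_rfl
  have hψ'c := hψ.continuous_deriv le_rfl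
  have hφ'c := hφ.continuous_deriv le_rfl
  set Γ : ℝ → ℝ → ℝ × ℝ × ℝ × ℝ := fun S t =>
    (t, x t + (φ S - x S) * ψ t, deriv x t + (φ S - x S) * deriv ψ t, φ S)
  have hΓ : Continuous (uncurry Γ) := by fun_prop
  have hderiv : ∀ S t, HasDerivAt (fun S => uncurry₄ L (Γ S t))
      (fderiv ℝ (uncurry₄ L) (Γ S t) (0, (deriv φ S - deriv x S) * ψ t,
        (deriv φ S - deriv x S) * deriv ψ t, deriv φ S)) S := fun S t =>
    (hL.differentiable one_ne_zero _).hasFDerivAt.uncurry₄_comp_hasDerivAt (hasDerivAt_const S t)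
      ((((hφd S).hasDerivAt.sub (hxd S).hasDerivAt).mul_const (ψ t)).const_add (x t))
      ((((hφd S).hasDerivAt.sub (hxd S).hasDerivAt).mul_const (deriv ψ t)).const_add (deriv x t))
      (hφd S).hasDerivAt
  have hG' : Continuous (uncurry fun S t => fderiv ℝ (uncurry₄ L) (Γ S t)
      (0, (deriv φ S - deriv x S) * ψ t, (deriv φ S - deriv x S) * deriv ψ t, deriv φ S)) :=
    ((hL.continuous_fderiv one_ne_zero).comp hΓ).clm_apply (by fun_prop)
  have hfun :
      (fun S => ∫ t in a..S, L t (variation x φ ψ S t) (deriv (variation x φ ψ S) t) (φ S))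
        = fun S => ∫ t in a..S, uncurry₄ L (Γ S t) := by
    funext S
    simp only [deriv_variation hxd hψd]
    rfl
  rw [hfun]
  refine (hasDerivAt_intervalIntegral_diag (G := fun S t => uncurry₄ L (Γ S t))
    (hL.continuous.comp hΓ) hG' hderiv a T).congr_deriv ?_
  rw [add_assoc, ← integral_fderiv_uncurry₄_apply hL hx hψ]
  congr 1
  · simp [Γ, uncurry₄, hxT]
  · simp [Γ, hxT]

end Variation

theorem classical_transversality_endpoint_lagrangian_general
    (a b x_a T : ℝ) (L : ℝ → ℝ → ℝ → ℝ → ℝ) (φ x : ℝ → ℝ)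
    (hT : T ∈ Set.Ioo a b)
    (hL : ContDiff ℝ 2 fun p : ℝ × ℝ × ℝ × ℝ => L p.1 p.2.1 p.2.2.1 p.2.2.2)
    (hφ : ContDiff ℝ 1 φ)
    (hx : ContDiff ℝ 2 x) (hxa : x a = x_a) (hxT : x T = φ T)
    (J : (ℝ → ℝ) → ℝ → ℝ)
    (hJ : ∀ y S, J y S = ∫ t in a..S, L t (y t) (deriv y t) (φ S))
    -- local extremality among admissible pairs (with terminal point on the curve φ)
    (hext : ∃ δ > 0,
      (∀ (y : ℝ → ℝ) (S : ℝ), ContDiff ℝ 1 y → y a = x_a → y S = φ S →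
        S ∈ Set.Icc a b →
        (∀ s ∈ Set.Icc a b, |y s - x s| + |deriv y s - deriv x s| < δ) →
        |S - T| < δ → J x T ≤ J y S) ∨
      (∀ (y : ℝ → ℝ) (S : ℝ), ContDiff ℝ 1 y → y a = x_a → y S = φ S →
        S ∈ Set.Icc a b →
        (∀ s ∈ Set.Icc a b, |y s - x s| + |deriv y s - deriv x s| < δ) →
        |S - T| < δ → J y S ≤ J x T))
    -- Euler–Lagrange equation on [a,T]
    (hEL : ∀ t ∈ Set.Icc a T,
      deriv (fun y => L t y (deriv x t) (φ T)) (x t)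
        - deriv (fun s => deriv (fun v => L s (x s) v (φ T)) (deriv x s)) t = 0) :
    (deriv φ T - deriv x T) * deriv (fun v => L T (x T) v (φ T)) (deriv x T)
      + deriv φ T * (∫ t in a..T, deriv (fun w => L t (x t) (deriv x t) w) (φ T))
      + L T (x T) (deriv x T) (φ T) = 0 := by
  obtain ⟨haT, hTb⟩ := hT
  have hL₂ : ContDiff ℝ 2 (uncurry₄ L) := hL
  have hx₁ : ContDiff ℝ 1 x := hx.of_le one_le_two
  obtain ⟨ψ, hψ, hψa, hψT⟩ := exists_contDiff_eq_zero_eventually_eq_one haT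
  have hψ₁ : ContDiff ℝ 1 ψ := hψ.of_le (by simp)
  have hextr : IsLocalExtr (fun S => J (variation x φ ψ S) S) T := by
    obtain ⟨δ, hδ, hext⟩ := hext
    refine hext.imp (fun h => ?_) (fun h => ?_) <;>
    · filter_upwards [eventually_variation_close hφ.continuous.continuousAt hx₁ hψ₁ hxT hδ,
        hψT, Icc_mem_nhds haT hTb, Metric.ball_mem_nhds T hδ] with S hclose hψS hS hST
      simpa [variation_self hxT] using h _ S (contDiff_variation hx₁ hψ₁ S)
        (by simp [variation, hψa, hxa]) (by simp [variation, hψS]) hS hclose hST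
  have hJ' : (fun S => J (variation x φ ψ S) S) = fun S =>
      ∫ t in a..S, L t (variation x φ ψ S t) (deriv (variation x φ ψ S) t) (φ S) :=
    funext fun S => hJ _ _
  have h0 := hextr.hasDerivAt_eq_zero
    (hJ' ▸ hasDerivAt_integral_variation (hL₂.of_le one_le_two) hφ hx₁ hψ₁ hxT a)
  rw [integral_mul_partialDeriv₂_add_deriv_mul_partialDeriv₃ hL₂ hx hψ₁ haT.le hEL, hψa,
    hψT.self_of_nhds] at h0
  show (deriv φ T - deriv x T) * partialDeriv₃ L T (x T) (deriv x T) (φ T)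
      + deriv φ T * (∫ t in a..T, partialDeriv₄ L t (x t) (deriv x t) (φ T))
      + L T (x T) (deriv x T) (φ T) = 0
  linear_combination h0

/-- Classical transversality condition with Lagrangian depending on the end-point
(`α → 1` limit of Theorem 2): if `(x,T)` extremizes
`J(y,S) = ∫_a^S L(t, y(t), y'(t), φ(S)) dt` subject to `y(a) = x_a` and `y(S) = φ(S)`,
and `x` satisfies the Euler–Lagrange equation `∂₂L − d/dt ∂₃L = 0` on `[a,T]`, then
`(φ'(T) − x'(T))·∂₃L + φ'(T)·∫_a^T ∂₄L dt + L(T,x(T),x'(T),φ(T)) = 0`. -/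
theorem classical_transversality_endpoint_lagrangian
    (a b x_a T : ℝ) (L : ℝ → ℝ → ℝ → ℝ → ℝ) (φ x : ℝ → ℝ)
    (hab : a < b) (hT : T ∈ Set.Ioo a b)
    (hL : ContDiff ℝ 2 fun p : ℝ × ℝ × ℝ × ℝ => L p.1 p.2.1 p.2.2.1 p.2.2.2)
    (hφ : ContDiff ℝ 1 φ)
    (hx : ContDiff ℝ 2 x) (hxa : x a = x_a) (hxT : x T = φ T)
    (J : (ℝ → ℝ) → ℝ → ℝ)
    (hJ : ∀ y S, J y S = ∫ t in a..S, L t (y t) (deriv y t) (φ S))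
    -- local extremality among admissible pairs (with terminal point on the curve φ)
    (hext : ∃ δ > 0,
      (∀ (y : ℝ → ℝ) (S : ℝ), ContDiff ℝ 1 y → y a = x_a → y S = φ S →
        S ∈ Set.Icc a b →
        (∀ s ∈ Set.Icc a b, |y s - x s| + |deriv y s - deriv x s| < δ) →
        |S - T| < δ → J x T ≤ J y S) ∨
      (∀ (y : ℝ → ℝ) (S : ℝ), ContDiff ℝ 1 y → y a = x_a → y S = φ S →
        S ∈ Set.Icc a b →
        (∀ s ∈ Set.Icc a b, |y s - x s| + |deriv y s - deriv x s| < δ) →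
        |S - T| < δ → J y S ≤ J x T))
    -- Euler–Lagrange equation on [a,T]
    (hEL : ∀ t ∈ Set.Icc a T,
      deriv (fun y => L t y (deriv x t) (φ T)) (x t)
        - deriv (fun s => deriv (fun v => L s (x s) v (φ T)) (deriv x s)) t = 0) :
    (deriv φ T - deriv x T) * deriv (fun v => L T (x T) v (φ T)) (deriv x T)
      + deriv φ T * (∫ t in a..T, deriv (fun w => L t (x t) (deriv x t) w) (φ T))
      + L T (x T) (deriv x T) (φ T) = 0 :=
  classical_transversality_endpoint_lagrangian_general a b x_a T L φ x hT hL hφ hx hxa hxT J hJ hext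
    hEL
end
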